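/- arXiv:2010.02047 — 2 statements merged into one kernel-verified Lean document; each statement's English description precedes it below -/
import Mathlib

section
/- Let L = (E, ⪯_E) be an object-centric event log and ot an object type. Then the flattened event log L^ot = (E^ot, ⪯_E^ot) is itself an object-centric event log; that is, (i) ⪯_E^ot is a partial order on E^ot (reflexive, antisymmetric, and transitive), (ii) any two events of E^ot with equal event identifiers are equal, and (iii) e'_i ⪯_E^ot e''_j implies π_time(e'_i) ≤ π_time(e''_j). -/
/-- An event `(ei, act, time, omap, vmap)`. -/
structure Event (EI Act Time OT OI Att Val : Type*) where
  ei : EI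
  act : Act
  time : Time
  omap : OT → Set OI
  vmap : Att → Option Val

/-- An object-centric event log `L = (E, ⪯_E)`. -/
structure OCLog (EI Act Time OT OI Att Val : Type*) [LinearOrder Time] where
  E : Set (Event EI Act Time OT OI Att Val)
  le : Event EI Act Time OT OI Att Val → Event EI Act Time OT OI Att Val → Prop
  le_refl : ∀ e ∈ E, le e e
  le_antisymm : ∀ e1 ∈ E, ∀ e2 ∈ E, le e1 e2 → le e2 e1 → e1 = e2
  le_trans : ∀ e1 ∈ E, ∀ e2 ∈ E, ∀ e3 ∈ E, le e1 e2 → le e2 e3 → le e1 e3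
  ei_unique : ∀ e1 ∈ E, ∀ e2 ∈ E, e1.ei = e2.ei → e1 = e2
  time_mono : ∀ e1 ∈ E, ∀ e2 ∈ E, le e1 e2 → e1.time ≤ e2.time

variable {EI Act Time OT OI Att Val : Type*} [LinearOrder Time] [DecidableEq OT]

/-- The flattened event `e_i = ((π_ei(e), i), π_act(e), π_time(e), π_omap(e) ⊕ (case, {i}), π_vmap(e))`. -/
def flatEvent (caseOT : OT) (e : Event EI Act Time OT OI Att Val) (i : OI) :
    Event (EI × OI) Act Time OT OI Att Val :=
  ⟨(e.ei, i), e.act, e.time, Function.update e.omap caseOT {i}, e.vmap⟩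

/-- The set of events `E^{ot}` of the flattened event log. -/
def flatE (L : OCLog EI Act Time OT OI Att Val) (caseOT ot : OT) :
    Set (Event (EI × OI) Act Time OT OI Att Val) :=
  {x | ∃ e ∈ L.E, ∃ i ∈ e.omap ot, x = flatEvent caseOT e i}

/-- The flattened order `⪯_E^{ot}`: `e'_i ⪯_E^{ot} e''_j` iff `e' ⪯_E e''` and `(e' = e'' → i = j)`. -/
def flatLe (L : OCLog EI Act Time OT OI Att Val) (caseOT ot : OT)
    (x y : Event (EI × OI) Act Time OT OI Att Val) : Prop :=
  ∃ e' ∈ L.E, ∃ i ∈ e'.omap ot, ∃ e'' ∈ L.E, ∃ j ∈ e''.omap ot,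
    x = flatEvent caseOT e' i ∧ y = flatEvent caseOT e'' j ∧
    L.le e' e'' ∧ (e' = e'' → i = j)

/-- the flattened event log `L^{ot} = (E^{ot}, ⪯_E^{ot})` is itself an
object-centric event log: the flattened order is reflexive, antisymmetric and transitive on
`E^{ot}`, event identifiers are unique, and time cannot go backwards. -/
theorem flattened_is_object_centric_event_log
    (L : OCLog EI Act Time OT OI Att Val) (caseOT ot : OT) :
    (∀ x ∈ flatE L caseOT ot, flatLe L caseOT ot x x) ∧
    (∀ x ∈ flatE L caseOT ot, ∀ y ∈ flatE L caseOT ot,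
      flatLe L caseOT ot x y → flatLe L caseOT ot y x → x = y) ∧
    (∀ x ∈ flatE L caseOT ot, ∀ y ∈ flatE L caseOT ot, ∀ z ∈ flatE L caseOT ot,
      flatLe L caseOT ot x y → flatLe L caseOT ot y z → flatLe L caseOT ot x z) ∧
    (∀ x ∈ flatE L caseOT ot, ∀ y ∈ flatE L caseOT ot, x.ei = y.ei → x = y) ∧
    (∀ x ∈ flatE L caseOT ot, ∀ y ∈ flatE L caseOT ot,
      flatLe L caseOT ot x y → x.time ≤ y.time) := by

  have inj : ∀ e1 ∈ L.E, ∀ e2 ∈ L.E, ∀ i j,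
      flatEvent caseOT e1 i = flatEvent (EI := EI) (Val := Val) (Att := Att) caseOT e2 j →
      e1 = e2 ∧ i = j := by
    intro e1 he1 e2 he2 i j h
    have hei : (e1.ei, i) = (e2.ei, j) := congrArg Event.ei h
    have h1 : e1.ei = e2.ei := (Prod.mk.injEq _ _ _ _ ▸ hei).1
    have h2 : i = j := (Prod.mk.injEq _ _ _ _ ▸ hei).2
    exact ⟨L.ei_unique e1 he1 e2 he2 h1, h2⟩
  refine ⟨?_, ?_, ?_, ?_, ?_⟩
  · rintro x ⟨e, he, i, hi, rfl⟩
    exact ⟨e, he, i, hi, e, he, i, hi, rfl, rfl, L.le_refl e he, fun _ => rfl⟩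
  · rintro x ⟨e, he, i, hi, rfl⟩ y ⟨f, hf, j, hj, rfl⟩
      ⟨e1, he1, i1, hi1, e2, he2, i2, hi2, hx1, hy1, hle1, him1⟩
      ⟨f1, hf1, j1, hj1, f2, hf2, j2, hj2, hy2, hx2, hle2, him2⟩
    obtain ⟨rfl, rfl⟩ := inj e he e1 he1 i i1 hx1
    obtain ⟨rfl, rfl⟩ := inj f hf e2 he2 j i2 hy1
    obtain ⟨rfl, rfl⟩ := inj f hf f1 hf1 j j1 hy2
    obtain ⟨rfl, rfl⟩ := inj e he f2 hf2 i j2 hx2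
    have hef : e = f := L.le_antisymm e he f hf hle1 hle2
    subst hef
    rw [him1 rfl]
  · rintro x ⟨e, he, i, hi, rfl⟩ y ⟨f, hf, j, hj, rfl⟩ z ⟨g, hg, k, hk, rfl⟩
      ⟨e1, he1, i1, hi1, e2, he2, i2, hi2, hx1, hy1, hle1, him1⟩
      ⟨f1, hf1, j1, hj1, f2, hf2, j2, hj2, hy2, hz2, hle2, him2⟩
    obtain ⟨rfl, rfl⟩ := inj e he e1 he1 i i1 hx1
    obtain ⟨rfl, rfl⟩ := inj f hf e2 he2 j i2 hy1
    obtain ⟨rfl, rfl⟩ := inj f hf f1 hf1 j j1 hy2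
    obtain ⟨rfl, rfl⟩ := inj g hg f2 hf2 k j2 hz2
    refine ⟨e, he, i, hi, g, hg, k, hk, rfl, rfl, L.le_trans e he f hf g hg hle1 hle2, ?_⟩
    intro heg
    subst heg
    have hef : e = f := L.le_antisymm e he f hf hle1 hle2
    subst hef
    rw [him1 rfl, him2 rfl]
  · rintro x ⟨e, he, i, hi, rfl⟩ y ⟨f, hf, j, hj, rfl⟩ h
    have hei : (e.ei, i) = (f.ei, j) := h
    have h1 : e.ei = f.ei := (Prod.mk.injEq _ _ _ _ ▸ hei).1
    have h2 : i = j := (Prod.mk.injEq _ _ _ _ ▸ hei).2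
    subst h2
    rw [L.ei_unique e he f hf h1]
  · rintro x ⟨e, he, i, hi, rfl⟩ y ⟨f, hf, j, hj, rfl⟩
      ⟨e1, he1, i1, hi1, e2, he2, i2, hi2, hx1, hy1, hle1, _⟩
    obtain ⟨rfl, rfl⟩ := inj e he e1 he1 i i1 hx1
    obtain ⟨rfl, rfl⟩ := inj f hf e2 he2 j i2 hy1
    exact L.time_mono e he f hf hle1
end

section
/- Let L = (E, ⪯_E) be an object-centric event log and ot an object type such that every event refers to exactly one object of type ot, i.e., |π_omap(e)(ot)| = 1 for all e ∈ E (the situation mimicking a traditional event log with a single case notion). Write i(e) for the unique element of π_omap(e)(ot). Then the map e ↦ e_{i(e)} is a bijection from E onto E^ot, and it is an order isomorphism: for all e', e'' ∈ E, e' ⪯_E e'' if and only if e'_{i(e')} ⪯_E^ot e''_{i(e'')}. -/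
variable {EI Act Time OT OI Att Val : Type*} [LinearOrder Time] [DecidableEq OT]

/-- if every event refers to exactly one object of type `ot`
(`π_omap(e)(ot) = {i(e)}` for all `e ∈ E`), then `e ↦ e_{i(e)}` is a bijection from `E`
onto `E^{ot}` and an order isomorphism: `e' ⪯_E e'' ↔ e'_{i(e')} ⪯_E^{ot} e''_{i(e'')}`. -/
theorem single_case_notion_order_iso
    (L : OCLog EI Act Time OT OI Att Val) (caseOT ot : OT)
    (ie : Event EI Act Time OT OI Att Val → OI)
    (hie : ∀ e ∈ L.E, e.omap ot = {ie e}) :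
    Set.BijOn (fun e => flatEvent caseOT e (ie e)) L.E (flatE L caseOT ot) ∧
    ∀ e' ∈ L.E, ∀ e'' ∈ L.E,
      (L.le e' e'' ↔
        flatLe L caseOT ot (flatEvent caseOT e' (ie e')) (flatEvent caseOT e'' (ie e''))) := by
  have hmem : ∀ e ∈ L.E, ie e ∈ e.omap ot := by
    intro e he; rw [hie e he]; rfl
  have hei : ∀ x (i : OI) y (j : OI),
      flatEvent (EI := EI) (Act := Act) (Time := Time) (OI := OI) (Att := Att) (Val := Val)
        caseOT x i = flatEvent caseOT y j → x.ei = y.ei ∧ i = j := by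
    intro x i y j h
    have := congrArg Event.ei h
    simp only [flatEvent] at this
    exact ⟨congrArg Prod.fst this, congrArg Prod.snd this⟩
  constructor
  · refine ⟨?_, ?_, ?_⟩
    · intro e he
      exact ⟨e, he, ie e, hmem e he, rfl⟩
    · intro x hx y hy h
      obtain ⟨h1, h2⟩ := hei x (ie x) y (ie y) h
      exact L.ei_unique x hx y hy h1
    · rintro z ⟨e, he, i, hi, rfl⟩
      have : i = ie e := by rw [hie e he] at hi; exact hi
      subst this
      exact ⟨e, he, rfl⟩
  · intro e' he' e'' he''
    constructor
    · intro h
      refine ⟨e', he', ie e', hmem e' he', e'', he'', ie e'', hmem e'' he'', rfl, rfl, h, ?_⟩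
      intro heq; rw [heq]
    · rintro ⟨a, ha, i, hi, b, hb, j, hj, hx, hy, hle, -⟩
      obtain ⟨h1, h2⟩ := hei e' (ie e') a i hx
      obtain ⟨h3, h4⟩ := hei e'' (ie e'') b j hy
      have ea : e' = a := L.ei_unique e' he' a ha h1
      have eb : e'' = b := L.ei_unique e'' he'' b hb h3
      rw [ea, eb]; exact hle
end
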